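/- Let m be a positive integer, r≥0 an integer, α>0, and X a Poisson random variable with mean α/m. Then for n≥0, E[(mX+r)_{n,λ}] = D^{(r)}_{m,λ}(n,α), i.e., e^{-α/m} Σ_{k=0}^∞ (mk+r)_{n,λ} (α/m)^k/k! = D^{(r)}_{m,λ}(n,α). -/

import Mathlib

open Finset

/-- Degenerate falling factorial `(x)_{n,λ} = x(x-λ)⋯(x-(n-1)λ)`. -/
noncomputable def dfall (lam x : ℝ) (n : ℕ) : ℝ := ∏ i ∈ Finset.range n, (x - i * lam)

/-- Ordinary falling factorial `(x)_n = x(x-1)⋯(x-n+1)`. -/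
noncomputable def ffall (x : ℝ) (n : ℕ) : ℝ := ∏ i ∈ Finset.range n, (x - i)

/-! Put `F_ρ(t) = e_λ^ρ(t) · exp (μ (e_λ^c(t) - 1))` and `M_n(ρ) = ∑ₖ μᵏ/k! · (ck + ρ)_{n,λ}`.
Differentiating gives `F_ρ' = ρ F_{ρ-λ} + cμ F_{ρ+c-λ}` near `0`, while
`(x)_{n+1,λ} = x (x-λ)_{n,λ}` and `k μᵏ/k! = μ · μᵏ⁻¹/(k-1)!` give the same recurrence
`M_{n+1}(ρ) = ρ M_n(ρ-λ) + cμ M_n(ρ+c-λ)`. Since `M_0(ρ) = e^μ = e^μ F_ρ(0)`, induction on `n`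
for all real shifts `ρ` at once yields `M_n(ρ) = e^μ F_ρ⁽ⁿ⁾(0)`. -/

open Nat Topology

lemma dfall_zero (lam x : ℝ) : dfall lam x 0 = 1 := by simp [dfall]

lemma dfall_succ (lam x : ℝ) (n : ℕ) : dfall lam x (n + 1) = x * dfall lam (x - lam) n := by
  rw [dfall, dfall, prod_range_succ', mul_comm]
  congr 1
  · simp
  · exact prod_congr rfl fun i _ => by push_cast; ring

/-- `e_λ^ρ(t) · exp (μ (e_λ^c(t) - 1))`; for `μ = x / m`, `c = m`, `ρ = r` this is the generating
function of the degenerate `r`-Dowling polynomials. -/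
noncomputable def dowlingGenFun (lam c μ ρ t : ℝ) : ℝ :=
  (1 + lam * t) ^ (ρ / lam) * Real.exp (μ * ((1 + lam * t) ^ (c / lam) - 1))

section GenFun

variable {lam : ℝ} (c μ : ℝ)

lemma dowlingGenFun_zero (ρ : ℝ) : dowlingGenFun lam c μ ρ 0 = 1 := by
  simp [dowlingGenFun]

lemma hasDerivAt_dowlingGenFun (hlam : lam ≠ 0) (ρ : ℝ) {t : ℝ} (ht : 0 < 1 + lam * t) :
    HasDerivAt (dowlingGenFun lam c μ ρ)
      (ρ * dowlingGenFun lam c μ (ρ - lam) t + c * μ * dowlingGenFun lam c μ (ρ + c - lam) t)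
      t := by
  have hu : HasDerivAt (fun t => 1 + lam * t) lam t := by
    simpa using ((hasDerivAt_id t).const_mul lam).const_add 1
  have hpow (p : ℝ) := hu.rpow_const (p := p) (Or.inl ht.ne')
  refine ((hpow (ρ / lam)).fun_mul (((hpow (c / lam)).sub_const 1).const_mul μ).exp).congr_deriv ?_
  have hexp₁ : (ρ - lam) / lam = ρ / lam - 1 := by field_simp
  have hexp₂ : (ρ + c - lam) / lam = ρ / lam + (c / lam - 1) := by field_simp; ring
  simp only [dowlingGenFun, hexp₁, hexp₂, Real.rpow_add ht]
  field_simp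

lemma contDiffAt_dowlingGenFun (ρ : ℝ) {t : ℝ} (ht : 0 < 1 + lam * t) (n : ℕ) :
    ContDiffAt ℝ n (dowlingGenFun lam c μ ρ) t := by
  have hu : ContDiffAt ℝ n (fun t => 1 + lam * t) t := by fun_prop
  exact (hu.rpow_const_of_ne ht.ne').mul
    ((contDiffAt_const.mul ((hu.rpow_const_of_ne ht.ne').sub contDiffAt_const)).exp)

lemma iteratedDeriv_succ_dowlingGenFun (hlam : lam ≠ 0) (ρ : ℝ) (n : ℕ) :
    iteratedDeriv (n + 1) (dowlingGenFun lam c μ ρ) 0 =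
      ρ * iteratedDeriv n (dowlingGenFun lam c μ (ρ - lam)) 0 +
        c * μ * iteratedDeriv n (dowlingGenFun lam c μ (ρ + c - lam)) 0 := by
  have h0 : (0 : ℝ) < 1 + lam * 0 := by simp
  have hderiv : deriv (dowlingGenFun lam c μ ρ) =ᶠ[𝓝 0] fun t =>
      ρ * dowlingGenFun lam c μ (ρ - lam) t + c * μ * dowlingGenFun lam c μ (ρ + c - lam) t := by
    have hnhds : {t : ℝ | 0 < 1 + lam * t} ∈ 𝓝 0 :=
      (isOpen_lt continuous_const (by fun_prop)).mem_nhds h0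
    filter_upwards [hnhds] with t ht
    exact (hasDerivAt_dowlingGenFun c μ hlam ρ ht).deriv
  rw [iteratedDeriv_succ', hderiv.iteratedDeriv_eq, iteratedDeriv_fun_add
    (contDiffAt_const.mul (contDiffAt_dowlingGenFun c μ _ h0 n))
    (contDiffAt_const.mul (contDiffAt_dowlingGenFun c μ _ h0 n)),
    iteratedDeriv_const_mul_field, iteratedDeriv_const_mul_field]

end GenFun

section Moments

variable {lam c μ : ℝ}

lemma hasSum_dfall_succ {ρ A B : ℝ} {n : ℕ}
    (hA : HasSum (fun k : ℕ => μ ^ k / k ! * dfall lam (c * k + (ρ - lam)) n) A)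
    (hB : HasSum (fun k : ℕ => μ ^ k / k ! * dfall lam (c * k + (ρ + c - lam)) n) B) :
    HasSum (fun k : ℕ => μ ^ k / k ! * dfall lam (c * k + ρ) (n + 1)) (ρ * A + c * μ * B) := by
  have hshift : HasSum (fun k : ℕ => c * k * (μ ^ k / k !) * dfall lam (c * k + (ρ - lam)) n)
      (c * μ * B) := by
    rw [← hasSum_nat_add_iff' 1, sum_range_one, Nat.cast_zero, mul_zero, zero_mul, zero_mul,
      sub_zero]
    refine (hB.mul_left (c * μ)).congr_fun fun k => ?_
    rw [show c * (k + 1 : ℕ) + (ρ - lam) = c * k + (ρ + c - lam) by push_cast; ring,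
      factorial_succ, pow_succ]
    push_cast
    field_simp
  refine ((hA.mul_left ρ).add hshift).congr_fun fun k => ?_
  rw [dfall_succ, show c * k + ρ - lam = c * k + (ρ - lam) by ring]
  ring

lemma hasSum_dfall_dowlingGenFun (hlam : lam ≠ 0) (n : ℕ) (ρ : ℝ) :
    HasSum (fun k : ℕ => μ ^ k / k ! * dfall lam (c * k + ρ) n)
      (Real.exp μ * iteratedDeriv n (dowlingGenFun lam c μ ρ) 0) := by
  induction n generalizing ρ with
  | zero =>
    simp only [dfall_zero, mul_one, iteratedDeriv_zero, dowlingGenFun_zero]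
    exact Real.exp_eq_exp_ℝ ▸ NormedSpace.expSeries_div_hasSum_exp μ
  | succ n ih =>
    rw [iteratedDeriv_succ_dowlingGenFun c μ hlam]
    convert hasSum_dfall_succ (ih (ρ - lam)) (ih (ρ + c - lam)) using 1
    ring

end Moments

theorem stmt5_general (m : ℕ) (r : ℕ) (α lam : ℝ) (hlam : lam ≠ 0)
    (D : ℕ → ℝ)
    (hD : ∀ n : ℕ, iteratedDeriv n
        (fun t : ℝ => (1 + lam * t) ^ ((r : ℝ) / lam) *
          Real.exp ((α / m) * ((1 + lam * t) ^ ((m : ℝ) / lam) - 1))) 0 = D n) :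
    ∀ n : ℕ,
      Real.exp (-(α / m)) *
        ∑' k : ℕ, dfall lam ((m : ℝ) * k + r) n * (α / m) ^ k / (Nat.factorial k) = D n := by
  intro n
  have hsum := (hasSum_dfall_dowlingGenFun (c := m) (μ := α / m) hlam n r).tsum_eq
  calc _ = Real.exp (-(α / m)) * ∑' k : ℕ, (α / m) ^ k / k ! * dfall lam (m * k + r) n := by
        congr 1
        exact tsum_congr fun k => by ring
    _ = iteratedDeriv n (dowlingGenFun lam m (α / m) r) 0 := by
        rw [hsum, ← mul_assoc, ← Real.exp_add, neg_add_cancel, Real.exp_zero, one_mul]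
    _ = D n := hD n

theorem stmt5 (m : ℕ) (hm : 0 < m) (r : ℕ) (α lam : ℝ) (hα : 0 < α) (hlam : lam ≠ 0)
    (D : ℕ → ℝ)
    (hD : ∀ n : ℕ, iteratedDeriv n
        (fun t : ℝ => (1 + lam * t) ^ ((r : ℝ) / lam) *
          Real.exp ((α / m) * ((1 + lam * t) ^ ((m : ℝ) / lam) - 1))) 0 = D n) :
    ∀ n : ℕ,
      Real.exp (-(α / m)) *
        ∑' k : ℕ, dfall lam ((m : ℝ) * k + r) n * (α / m) ^ k / (Nat.factorial k) = D n :=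
  stmt5_general m r α lam hlam D hD
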